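/- Let d ≥ 1, κ, W ≥ 1, ρ ∈ (0,1), and t ≥ 1. Let F̃, G, K ∈ ℝ^{d×d} satisfy ‖F̃^j‖₂ ≤ κ² ρ^j for all j ≥ 0, ‖G‖₂ ≤ κ, and ‖K‖₂ ≤ κ. Let s_0 ∈ ℝ^d and w_j ∈ ℝ^d (j ≥ −1, with w_{−1} = s_0) satisfy ‖w_j‖₂ ≤ W, and let M_k^{[s]} ∈ ℝ^{d×d} satisfy ‖M_k^{[s]}‖₂ ≤ κ⁴ ρ^s for all k, s. Define s_t = F̃^t s_0 + Σ_{k=0}^{t−1} Σ_{s=1}^{k+1} F̃^{t−k−1} G M_k^{[s]} w_{k−s} + w_{t−1} and u_t = −K s_t + Σ_{s=1}^{t+1} M_t^{[s]} w_{t−s}. Then there is an absolute constant C > 0 such that ‖s_t‖₂ ≤ C · W κ⁷ (1−ρ)^{−2} and ‖u_t‖₂ ≤ C · W κ⁸ (1−ρ)^{−2}. -/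

import Mathlib

/-!
A disturbance-action sum `∑ₛ M^{[s]} w` has norm at most `κ⁴ W / (1 - ρ)`, by the geometric
series in `ρˢ`. In `s_t` each such sum is propagated through `G` and `F̃^{t-k-1}`, of norm at most
`κ³ ρ^{t-k-1}`, so summing over `k` yields a second geometric factor; the two remaining terms of
`s_t` are of lower order. The control adds `K s_t` and one more disturbance-action sum, so `C = 4`
works.
-/

/-- Spectral norm (ℓ²-operator norm) of a real square matrix. -/
noncomputable def spec13 {d : ℕ} (M : Matrix (Fin d) (Fin d) ℝ) : ℝ :=
  ‖Matrix.toEuclideanCLM (𝕜 := ℝ) M‖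

/-- A square matrix acting on Euclidean space. -/
noncomputable def mv13 {d : ℕ} (M : Matrix (Fin d) (Fin d) ℝ) (v : EuclideanSpace ℝ (Fin d)) :
    EuclideanSpace ℝ (Fin d) :=
  Matrix.toEuclideanCLM (𝕜 := ℝ) M v

open Finset

section Geometric

variable {ρ : ℝ}

lemma sum_range_pow_le_inv_one_sub (h0 : 0 ≤ ρ) (h1 : ρ < 1) (n : ℕ) :
    ∑ i ∈ range n, ρ ^ i ≤ (1 - ρ)⁻¹ := by
  simpa [← range_eq_Ico] using geom_sum_Ico_le_of_lt_one (m := 0) (n := n) h0 h1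

lemma sum_Icc_one_pow_le_inv_one_sub (h0 : 0 ≤ ρ) (h1 : ρ < 1) (n : ℕ) :
    ∑ i ∈ Icc 1 n, ρ ^ i ≤ (1 - ρ)⁻¹ := by
  refine le_trans ?_ (sum_range_pow_le_inv_one_sub h0 h1 (n + 1))
  refine sum_le_sum_of_subset_of_nonneg (fun i hi => ?_) fun i _ _ => pow_nonneg h0 i
  simp only [mem_Icc, mem_range] at hi ⊢
  omega

lemma sum_range_pow_sub_sub_one_le_inv_one_sub (h0 : 0 ≤ ρ) (h1 : ρ < 1) (n : ℕ) :
    ∑ k ∈ range n, ρ ^ (n - k - 1) ≤ (1 - ρ)⁻¹ := by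
  simp_rw [Nat.sub_right_comm _ _ 1]
  rw [sum_range_reflect (ρ ^ ·) n]
  exact sum_range_pow_le_inv_one_sub h0 h1 n

end Geometric

section MatrixAction

variable {d : ℕ}

lemma spec13_nonneg (A : Matrix (Fin d) (Fin d) ℝ) : 0 ≤ spec13 A :=
  norm_nonneg _

lemma norm_mv13_le (A : Matrix (Fin d) (Fin d) ℝ) (v : EuclideanSpace ℝ (Fin d)) :
    ‖mv13 A v‖ ≤ spec13 A * ‖v‖ :=
  (Matrix.toEuclideanCLM (𝕜 := ℝ) A).le_opNorm v

lemma norm_mv13_le_of_le {A : Matrix (Fin d) (Fin d) ℝ} {v : EuclideanSpace ℝ (Fin d)}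
    {a b : ℝ} (hA : spec13 A ≤ a) (hv : ‖v‖ ≤ b) : ‖mv13 A v‖ ≤ a * b :=
  (norm_mv13_le A v).trans (mul_le_mul hA hv (norm_nonneg v) ((spec13_nonneg A).trans hA))

lemma mv13_mul (A B : Matrix (Fin d) (Fin d) ℝ) (v : EuclideanSpace ℝ (Fin d)) :
    mv13 (A * B) v = mv13 A (mv13 B v) := by
  simp [mv13, map_mul]

lemma mv13_sum {ι : Type*} (A : Matrix (Fin d) (Fin d) ℝ) (s : Finset ι)
    (v : ι → EuclideanSpace ℝ (Fin d)) :
    mv13 A (∑ i ∈ s, v i) = ∑ i ∈ s, mv13 A (v i) :=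
  map_sum _ v s

end MatrixAction

section Bounds

variable {d : ℕ} {κ W ρ : ℝ}

lemma norm_sum_Icc_mv13_le {c : ℝ} (hc : 0 ≤ c) (h0 : 0 ≤ ρ) (h1 : ρ < 1) (n : ℕ)
    {M : ℕ → Matrix (Fin d) (Fin d) ℝ} (hM : ∀ s, 1 ≤ s → spec13 (M s) ≤ c * ρ ^ s)
    {v : ℕ → EuclideanSpace ℝ (Fin d)} (hv : ∀ s, ‖v s‖ ≤ W) :
    ‖∑ s ∈ Icc 1 n, mv13 (M s) (v s)‖ ≤ c * W * (1 - ρ)⁻¹ := by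
  have hW : 0 ≤ W := (norm_nonneg _).trans (hv 0)
  calc ‖∑ s ∈ Icc 1 n, mv13 (M s) (v s)‖
      ≤ ∑ s ∈ Icc 1 n, c * ρ ^ s * W :=
        norm_sum_le_of_le _ fun s hs => norm_mv13_le_of_le (hM s (mem_Icc.1 hs).1) (hv s)
    _ = c * W * ∑ s ∈ Icc 1 n, ρ ^ s := by
        rw [mul_sum]
        exact sum_congr rfl fun s _ => by ring
    _ ≤ c * W * (1 - ρ)⁻¹ := by
        gcongr
        exact sum_Icc_one_pow_le_inv_one_sub h0 h1 n

lemma norm_sum_range_sum_Icc_mv13_le (hκ : 0 ≤ κ) (h0 : 0 ≤ ρ) (h1 : ρ < 1) (t : ℕ)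
    {F G : Matrix (Fin d) (Fin d) ℝ} {M : ℕ → ℕ → Matrix (Fin d) (Fin d) ℝ}
    {w : ℕ → EuclideanSpace ℝ (Fin d)}
    (hF : ∀ j, spec13 (F ^ j) ≤ κ ^ 2 * ρ ^ j) (hG : spec13 G ≤ κ)
    (hM : ∀ k s, 1 ≤ s → spec13 (M k s) ≤ κ ^ 4 * ρ ^ s) (hw : ∀ j, ‖w j‖ ≤ W) :
    ‖∑ k ∈ range t, ∑ s ∈ Icc 1 (k + 1), mv13 (F ^ (t - k - 1) * (G * M k s)) (w (k + 1 - s))‖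
      ≤ κ ^ 7 * W * (1 - ρ)⁻¹ ^ 2 := by
  have hW : 0 ≤ W := (norm_nonneg _).trans (hw 0)
  have hinner : ∀ k, ‖∑ s ∈ Icc 1 (k + 1), mv13 (F ^ (t - k - 1) * (G * M k s)) (w (k + 1 - s))‖
      ≤ κ ^ 7 * W * (1 - ρ)⁻¹ * ρ ^ (t - k - 1) := by
    intro k
    simp only [mv13_mul, ← mv13_sum]
    refine (norm_mv13_le_of_le (hF _) (norm_mv13_le_of_le hG
      (norm_sum_Icc_mv13_le (pow_nonneg hκ 4) h0 h1 (k + 1) (hM k) fun s => hw _))).trans_eq ?_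
    ring
  calc _ ≤ ∑ k ∈ range t, κ ^ 7 * W * (1 - ρ)⁻¹ * ρ ^ (t - k - 1) :=
        norm_sum_le_of_le _ fun k _ => hinner k
    _ = κ ^ 7 * W * (1 - ρ)⁻¹ * ∑ k ∈ range t, ρ ^ (t - k - 1) := (mul_sum ..).symm
    _ ≤ κ ^ 7 * W * (1 - ρ)⁻¹ * (1 - ρ)⁻¹ := by
        gcongr
        exact sum_range_pow_sub_sub_one_le_inv_one_sub h0 h1 t
    _ = κ ^ 7 * W * (1 - ρ)⁻¹ ^ 2 := by ring

lemma norm_state_le (hκ : 1 ≤ κ) (h0 : 0 ≤ ρ) (h1 : ρ < 1) (t : ℕ)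
    {F G : Matrix (Fin d) (Fin d) ℝ} {M : ℕ → ℕ → Matrix (Fin d) (Fin d) ℝ}
    {w : ℕ → EuclideanSpace ℝ (Fin d)}
    (hF : ∀ j, spec13 (F ^ j) ≤ κ ^ 2 * ρ ^ j) (hG : spec13 G ≤ κ)
    (hM : ∀ k s, 1 ≤ s → spec13 (M k s) ≤ κ ^ 4 * ρ ^ s) (hw : ∀ j, ‖w j‖ ≤ W) :
    ‖mv13 (F ^ t) (w 0)
        + (∑ k ∈ range t, ∑ s ∈ Icc 1 (k + 1), mv13 (F ^ (t - k - 1) * (G * M k s)) (w (k + 1 - s)))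
        + w t‖ ≤ 3 * κ ^ 7 * W * (1 - ρ)⁻¹ ^ 2 := by
  have hW : 0 ≤ W := (norm_nonneg _).trans (hw 0)
  have hr : 1 ≤ (1 - ρ)⁻¹ ^ 2 := one_le_pow₀ ((one_le_inv₀ (by linarith)).2 (by linarith))
  have hκr : κ ^ 2 ≤ κ ^ 7 * (1 - ρ)⁻¹ ^ 2 :=
    (pow_le_pow_right₀ hκ (by norm_num)).trans (le_mul_of_one_le_right (by positivity) hr)
  have hinit : ‖mv13 (F ^ t) (w 0)‖ ≤ κ ^ 7 * W * (1 - ρ)⁻¹ ^ 2 := by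
    refine (norm_mv13_le_of_le (hF t) (hw 0)).trans ?_
    have := pow_le_one₀ h0 h1.le (n := t)
    nlinarith [mul_le_mul_of_nonneg_right hκr hW, mul_le_mul_of_nonneg_left this (sq_nonneg κ)]
  have hlast : ‖w t‖ ≤ κ ^ 7 * W * (1 - ρ)⁻¹ ^ 2 := by
    have := one_le_pow₀ hκ (n := 2)
    nlinarith [mul_le_mul_of_nonneg_right hκr hW, hw t]
  have hmid := norm_sum_range_sum_Icc_mv13_le (zero_le_one.trans hκ) h0 h1 t hF hG hM hw
  calc _ ≤ _ := norm_add₃_le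
    _ ≤ 3 * κ ^ 7 * W * (1 - ρ)⁻¹ ^ 2 := by linarith

lemma norm_control_le (hκ : 1 ≤ κ) (h0 : 0 ≤ ρ) (h1 : ρ < 1) (t : ℕ)
    {K : Matrix (Fin d) (Fin d) ℝ} {M : ℕ → Matrix (Fin d) (Fin d) ℝ}
    {w : ℕ → EuclideanSpace ℝ (Fin d)} {st : EuclideanSpace ℝ (Fin d)}
    (hK : spec13 K ≤ κ) (hM : ∀ s, 1 ≤ s → spec13 (M s) ≤ κ ^ 4 * ρ ^ s)
    (hw : ∀ j, ‖w j‖ ≤ W) (hst : ‖st‖ ≤ 3 * κ ^ 7 * W * (1 - ρ)⁻¹ ^ 2) :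
    ‖-(mv13 K st) + ∑ s ∈ Icc 1 (t + 1), mv13 (M s) (w (t + 1 - s))‖
      ≤ 4 * κ ^ 8 * W * (1 - ρ)⁻¹ ^ 2 := by
  have hW : 0 ≤ W := (norm_nonneg _).trans (hw 0)
  have hr : 1 ≤ (1 - ρ)⁻¹ := (one_le_inv₀ (by linarith)).2 (by linarith)
  have hκr : κ ^ 4 * (1 - ρ)⁻¹ ≤ κ ^ 8 * (1 - ρ)⁻¹ ^ 2 := by
    rw [sq]
    gcongr
    exacts [by norm_num, le_mul_of_one_le_right (by positivity) hr]
  have hfeedback := norm_mv13_le_of_le hK hst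
  have hdisturbance :=
    norm_sum_Icc_mv13_le (by positivity) h0 h1 (t + 1) hM fun s => hw (t + 1 - s)
  calc _ ≤ ‖mv13 K st‖ + ‖∑ s ∈ Icc 1 (t + 1), mv13 (M s) (w (t + 1 - s))‖ :=
        norm_add_le_of_le (norm_neg _).le le_rfl
    _ ≤ 4 * κ ^ 8 * W * (1 - ρ)⁻¹ ^ 2 := by
        nlinarith [mul_le_mul_of_nonneg_right hκr hW]

end Bounds

-- `w j` is the paper's `w_{j-1}`, so `w 0 = s_0`.
/-- bounds on the state and control of the online linear control problem.
Here `w j` encodes the disturbance `w_{j−1}` (so `w 0 = w_{−1} = s_0`).  If `‖F̃ʲ‖₂ ≤ κ²ρʲ`,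
`‖G‖₂, ‖K‖₂ ≤ κ`, all disturbances have norm at most `W`, and the DAC parameters satisfy
`‖M_k^{[s]}‖₂ ≤ κ⁴ρˢ`, then the state
`s_t = F̃ᵗ s₀ + ∑_{k<t} ∑_{s=1}^{k+1} F̃^{t−k−1} G M_k^{[s]} w_{k−s} + w_{t−1}` and control
`u_t = −K s_t + ∑_{s=1}^{t+1} M_t^{[s]} w_{t−s}` satisfy `‖s_t‖₂ ≤ C W κ⁷ (1−ρ)^{−2}` and
`‖u_t‖₂ ≤ C W κ⁸ (1−ρ)^{−2}` for an absolute constant `C > 0`. -/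
theorem stmt_13 : ∃ C > (0:ℝ),
    ∀ (d t : ℕ) (κ W ρ : ℝ), 1 ≤ d → 1 ≤ t → 1 ≤ κ → 1 ≤ W → ρ ∈ Set.Ioo (0:ℝ) 1 →
    ∀ (Ftil G K : Matrix (Fin d) (Fin d) ℝ),
      (∀ j : ℕ, spec13 (Ftil ^ j) ≤ κ ^ 2 * ρ ^ j) → spec13 G ≤ κ → spec13 K ≤ κ →
    ∀ w : ℕ → EuclideanSpace ℝ (Fin d), (∀ j, ‖w j‖ ≤ W) →
    ∀ M : ℕ → ℕ → Matrix (Fin d) (Fin d) ℝ,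
      (∀ k s : ℕ, 1 ≤ s → spec13 (M k s) ≤ κ ^ 4 * ρ ^ s) →
    ∀ st ut : EuclideanSpace ℝ (Fin d),
      st = mv13 (Ftil ^ t) (w 0)
          + (∑ k ∈ Finset.range t, ∑ s ∈ Finset.Icc 1 (k + 1),
              mv13 (Ftil ^ (t - k - 1) * (G * M k s)) (w (k + 1 - s)))
          + w t →
      ut = -(mv13 K st) + ∑ s ∈ Finset.Icc 1 (t + 1), mv13 (M t s) (w (t + 1 - s)) →
      ‖st‖ ≤ C * W * κ ^ 7 * ((1 - ρ)⁻¹) ^ 2 ∧ ‖ut‖ ≤ C * W * κ ^ 8 * ((1 - ρ)⁻¹) ^ 2 := by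
  refine ⟨4, by norm_num, ?_⟩
  intro d t κ W ρ _ _ hκ _ hρ F G K hF hG hK w hw M hM st ut hst hut
  obtain ⟨h0, h1⟩ := hρ
  have hW : 0 ≤ W := (norm_nonneg _).trans (hw 0)
  have hs : ‖st‖ ≤ 3 * κ ^ 7 * W * (1 - ρ)⁻¹ ^ 2 :=
    hst ▸ norm_state_le hκ h0.le h1 t hF hG hM hw
  have hu := hut ▸ norm_control_le hκ h0.le h1 t hK (hM t) hw hs
  constructor
  · have : 0 ≤ κ ^ 7 * W * (1 - ρ)⁻¹ ^ 2 := by positivity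
    linarith
  · linarith
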